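/- arXiv:1706.04233 — 6 statements merged into one kernel-verified Lean document; each statement's English description precedes it below -/
import Mathlib

section
/- Let A be a commutative ring graded by an abelian group Γ via (B_γ)_{γ∈Γ}, and suppose the set S = {γ ∈ Γ : B_γ ≠ 0} is finite. Then there exist a finite abelian group Δ and a Δ-grading (C_δ)_{δ∈Δ} of A such that the set of homogeneous elements is unchanged: ⋃_{γ∈Γ} B_γ = ⋃_{δ∈Δ} C_δ. -/
open DirectSum in
lemma sep_add (H : Type) [AddCommGroup H] [AddGroup.FG H] (T : Finset H) (hT : (0:H) ∉ T) :
    ∃ (Δ : Type) (_ : AddCommGroup Δ) (_ : Finite Δ) (φ : H →+ Δ), ∀ t ∈ T, φ t ≠ 0 := by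
  classical
  obtain ⟨n, ι, hι, p, hp, e, ⟨ψ⟩⟩ := AddCommGroup.equiv_free_prod_directSum_zmod H
  set N : ℕ := 1 + T.sup (fun t => (ψ t).1.support.sup fun i => ((ψ t).1 i).natAbs) with hN
  haveI : NeZero N := ⟨by omega⟩
  haveI hz : ∀ i : ι, NeZero (p i ^ e i) := fun i => ⟨pow_ne_zero _ (hp i).ne_zero⟩
  haveI : Finite (⨁ i : ι, ZMod (p i ^ e i)) :=
    Finite.of_equiv _ (DFinsupp.equivFunOnFintype (ι := ι)).symm
  refine ⟨(Fin n → ZMod N) × ⨁ i : ι, ZMod (p i ^ e i), inferInstance, inferInstance,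
    (AddMonoidHom.prodMap
      { toFun := fun v i => ((v i : ℤ) : ZMod N)
        map_zero' := by funext i; simp
        map_add' := by intro a b; funext i; simp }
      (AddMonoidHom.id _)).comp ψ.toAddMonoidHom, ?_⟩
  intro t ht h
  have h1 : ∀ i, (((ψ t).1 i : ℤ) : ZMod N) = 0 := fun i => congrFun (congrArg Prod.fst h) i
  have h2 : (ψ t).2 = 0 := congrArg Prod.snd h
  have h3 : (ψ t).1 = 0 := by
    ext i
    by_contra hne
    have hdvd : (N : ℤ) ∣ (ψ t).1 i := (ZMod.intCast_zmod_eq_zero_iff_dvd _ N).mp (h1 i)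
    have hdvd' : N ∣ ((ψ t).1 i).natAbs := Int.natAbs_dvd_natAbs.mpr hdvd
    have hge : N ≤ ((ψ t).1 i).natAbs := Nat.le_of_dvd (Int.natAbs_pos.mpr hne) hdvd'
    have hle : ((ψ t).1 i).natAbs ≤ N - 1 := by
      have h4 : ((ψ t).1 i).natAbs ≤ (ψ t).1.support.sup (fun j => ((ψ t).1 j).natAbs) :=
        Finset.le_sup (f := fun j => ((ψ t).1 j).natAbs) (Finsupp.mem_support_iff.mpr hne)
      have h5 : (ψ t).1.support.sup (fun j => ((ψ t).1 j).natAbs)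
          ≤ T.sup (fun t => (ψ t).1.support.sup fun i => ((ψ t).1 i).natAbs) :=
        Finset.le_sup (f := fun t => (ψ t).1.support.sup fun i => ((ψ t).1 i).natAbs) ht
      have : ((ψ t).1 i).natAbs ≤ T.sup (fun t => (ψ t).1.support.sup fun i => ((ψ t).1 i).natAbs) :=
        le_trans h4 h5
      omega
    omega
  have ht0 : t = 0 := by
    have : ψ t = 0 := Prod.ext h3 h2
    simpa using ψ.injective (by simp [this])
  exact hT (ht0 ▸ ht)

/-- A `Γ`-grading of a commutative ring `A`: a family of additive subgroups
`B γ` with `B γ * B δ ⊆ B (γ*δ)` such that every element of `A` has a unique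
finitely-supported decomposition into homogeneous components. -/
def IsGrading {A Γ : Type*} [CommRing A] [CommGroup Γ] (B : Γ → AddSubgroup A) : Prop :=
  (∀ γ δ : Γ, ∀ x ∈ B γ, ∀ y ∈ B δ, x * y ∈ B (γ * δ)) ∧
  (∀ a : A, ∃! f : Γ →₀ A, (∀ γ, f γ ∈ B γ) ∧ f.sum (fun _ x => x) = a)


/-- If a grading of a commutative ring has finite support, there is a grading
by a finite abelian group with the same set of homogeneous elements. -/
theorem exists_finite_grading_same_homogeneous {A Γ : Type} [CommRing A] [CommGroup Γ]
    (B : Γ → AddSubgroup A) (hB : IsGrading B) (hfin : {γ : Γ | B γ ≠ ⊥}.Finite) :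
    ∃ (Δ : Type) (iΔ : CommGroup Δ) (_ : Finite Δ) (C : Δ → AddSubgroup A),
      @IsGrading A Δ _ iΔ C ∧
        (⋃ γ : Γ, (B γ : Set A)) = ⋃ δ : Δ, (C δ : Set A) := by
  classical
  set S : Set Γ := {γ : Γ | B γ ≠ ⊥} with hSdef
  set H : Subgroup Γ := Subgroup.closure S with hHdef
  have hSH : ∀ γ ∈ S, γ ∈ H := fun γ hγ => Subgroup.subset_closure hγ
  haveI : Group.FG H := (Group.fg_iff_subgroup_fg H).mpr ((Subgroup.fg_iff H).mpr ⟨S, rfl, hfin⟩)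
  haveI : AddGroup.FG (Additive H) := GroupFG.iff_add_fg.mp ‹_›
  set Sf : Finset Γ := hfin.toFinset with hSfdef
  have hSf : ∀ γ ∈ Sf, γ ∈ S := fun γ h => hfin.mem_toFinset.mp h
  set T : Finset (Additive H) :=
    ((Sf.attach ×ˢ Sf.attach).image fun p =>
      Additive.ofMul ((⟨p.1.1, hSH _ (hSf _ p.1.2)⟩ : H) *
        (⟨p.2.1, hSH _ (hSf _ p.2.2)⟩ : H)⁻¹)).erase 0 with hTdef
  obtain ⟨Δ₀, iΔ₀, fΔ₀, φ, hφ⟩ := sep_add (Additive H) T (Finset.notMem_erase _ _)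
  set Δ : Type := Multiplicative Δ₀ with hΔdef
  letI iΔ : CommGroup Δ := Multiplicative.commGroup
  haveI : Finite Δ := fΔ₀
  set ρ : Γ → Δ := fun γ =>
    if h : γ ∈ H then Multiplicative.ofAdd (φ (Additive.ofMul (⟨γ, h⟩ : H))) else 1 with hρdef
  have hρmul : ∀ γ δ : Γ, γ ∈ H → δ ∈ H → ρ (γ * δ) = ρ γ * ρ δ := by
    intro γ δ h1 h2
    rw [hρdef]
    simp only [dif_pos (mul_mem h1 h2), dif_pos h1, dif_pos h2]
    rw [← ofAdd_add, ← map_add]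
    rfl
  have hρinj : ∀ s ∈ S, ∀ t ∈ S, ρ s = ρ t → s = t := by
    intro s hs t ht hst
    by_contra hne
    have hmemT : Additive.ofMul ((⟨s, hSH _ hs⟩ : H) * (⟨t, hSH _ ht⟩ : H)⁻¹) ∈ T := by
      rw [hTdef]
      refine Finset.mem_erase.mpr ⟨?_, ?_⟩
      · intro h0
        have : ((⟨s, hSH _ hs⟩ : H) * (⟨t, hSH _ ht⟩ : H)⁻¹) = 1 := h0
        have : (⟨s, hSH _ hs⟩ : H) = ⟨t, hSH _ ht⟩ := by
          rwa [mul_inv_eq_one] at this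
        exact hne (congrArg Subtype.val this)
      · refine Finset.mem_image.mpr ⟨(⟨s, hfin.mem_toFinset.mpr hs⟩, ⟨t, hfin.mem_toFinset.mpr ht⟩), ?_, rfl⟩
        exact Finset.mem_product.mpr ⟨Finset.mem_attach _ _, Finset.mem_attach _ _⟩
    apply hφ _ hmemT
    have e1 : φ (Additive.ofMul (⟨s, hSH _ hs⟩ : H)) = φ (Additive.ofMul (⟨t, hSH _ ht⟩ : H)) := by
      have := hst
      rw [hρdef] at this
      simp only [dif_pos (hSH _ hs), dif_pos (hSH _ ht)] at this
      exact this
    have : Additive.ofMul ((⟨s, hSH _ hs⟩ : H) * (⟨t, hSH _ ht⟩ : H)⁻¹)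
        = Additive.ofMul (⟨s, hSH _ hs⟩ : H) + (- Additive.ofMul (⟨t, hSH _ ht⟩ : H)) := rfl
    rw [this, map_add, map_neg, e1, add_neg_cancel]
  -- the new grading
  set C : Δ → AddSubgroup A := fun δ =>
    if h : ∃ s, s ∈ S ∧ ρ s = δ then B h.choose else ⊥ with hCdef
  have hCeq : ∀ s ∈ S, C (ρ s) = B s := by
    intro s hs
    have h : ∃ t, t ∈ S ∧ ρ t = ρ s := ⟨s, hs, rfl⟩
    rw [hCdef]
    simp only [dif_pos h]
    obtain ⟨h1, h2⟩ := h.choose_spec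
    rw [hρinj _ h1 _ hs h2]
  have hCbot : ∀ δ : Δ, (¬ ∃ s, s ∈ S ∧ ρ s = δ) → C δ = ⊥ := by
    intro δ h; rw [hCdef]; simp only [dif_neg h]
  have hmemS : ∀ (γ : Γ) (x : A), x ∈ B γ → x ≠ 0 → γ ∈ S := by
    intro γ x hx hne hbot
    rw [hbot] at hx
    exact hne (AddSubgroup.mem_bot.mp hx)
  have hρS : Set.InjOn ρ S := fun a ha b hb h => hρinj a ha b hb h
  refine ⟨Δ, iΔ, ‹_›, C, ⟨?_, ?_⟩, ?_⟩
  · -- multiplicativity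
    intro δ δ' x hx y hy
    by_cases h1 : ∃ s, s ∈ S ∧ ρ s = δ
    swap
    · have : x = 0 := by rw [hCbot δ h1] at hx; exact AddSubgroup.mem_bot.mp hx
      rw [this, zero_mul]; exact zero_mem _
    by_cases h2 : ∃ s, s ∈ S ∧ ρ s = δ'
    swap
    · have : y = 0 := by rw [hCbot δ' h2] at hy; exact AddSubgroup.mem_bot.mp hy
      rw [this, mul_zero]; exact zero_mem _
    obtain ⟨s, hs, rfl⟩ := h1
    obtain ⟨t, ht, rfl⟩ := h2
    rw [hCeq _ hs] at hx
    rw [hCeq _ ht] at hy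
    have hxy : x * y ∈ B (s * t) := hB.1 s t x hx y hy
    by_cases hz : x * y = 0
    · rw [hz]; exact zero_mem _
    have hst : s * t ∈ S := hmemS _ _ hxy hz
    have hxy' : x * y ∈ C (ρ s * ρ t) := by
      rw [← hρmul s t (hSH _ hs) (hSH _ ht), hCeq _ hst]
      exact hxy
    exact hxy'
  · -- decompositions
    intro a
    obtain ⟨f, ⟨hfB, hfsum⟩, hfuniq⟩ := hB.2 a
    have hfS : ↑f.support ⊆ S := by
      intro γ hγ
      exact hmemS γ (f γ) (hfB γ) (Finsupp.mem_support_iff.mp hγ)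
    refine ⟨f.mapDomain ρ, ⟨?_, ?_⟩, ?_⟩
    · intro δ
      by_cases hδ : δ ∈ f.support.image ρ
      · obtain ⟨γ, hγ, rfl⟩ := Finset.mem_image.mp hδ
        rw [Finsupp.mapDomain_apply' S f hfS hρS (hfS hγ), hCeq _ (hfS hγ)]
        exact hfB γ
      · have : f.mapDomain ρ δ = 0 := by
          by_contra h
          exact hδ (Finsupp.mapDomain_support (Finsupp.mem_support_iff.mpr h))
        rw [this]; exact zero_mem _
    · rw [Finsupp.sum_mapDomain_index (fun _ => rfl) (fun _ _ _ => rfl)]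
      exact hfsum
    · rintro g ⟨hgC, hgsum⟩
      set σ : Δ → Γ := fun δ => if h : ∃ s, s ∈ S ∧ ρ s = δ then h.choose else 1 with hσdef
      have hσ : ∀ δ : Δ, g δ ≠ 0 → σ δ ∈ S ∧ ρ (σ δ) = δ := by
        intro δ h0
        have hx : ∃ s, s ∈ S ∧ ρ s = δ := by
          by_contra hn
          have := hgC δ
          rw [hCbot δ hn] at this
          exact h0 (AddSubgroup.mem_bot.mp this)
        rw [hσdef]
        simp only [dif_pos hx]
        exact hx.choose_spec
      have hσinj : Set.InjOn σ ↑g.support := by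
        intro a ha b hb h
        have ha' := hσ a (Finsupp.mem_support_iff.mp ha)
        have hb' := hσ b (Finsupp.mem_support_iff.mp hb)
        rw [← ha'.2, ← hb'.2, h]
      set f' : Γ →₀ A := g.mapDomain σ with hf'def
      have happ : ∀ δ ∈ g.support, f' (σ δ) = g δ := by
        intro δ hδ
        exact Finsupp.mapDomain_apply' ↑g.support g subset_rfl hσinj hδ
      have hf'B : ∀ γ, f' γ ∈ B γ := by
        intro γ
        by_cases hγ : γ ∈ g.support.image σ
        · obtain ⟨δ, hδ, rfl⟩ := Finset.mem_image.mp hγ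
          obtain ⟨hσS, hσρ⟩ := hσ δ (Finsupp.mem_support_iff.mp hδ)
          rw [happ δ hδ]
          have hCd : C δ = B (σ δ) := (congrArg C hσρ).symm.trans (hCeq _ hσS)
          have := hgC δ
          rw [hCd] at this
          exact this
        · have : f' γ = 0 := by
            by_contra h
            exact hγ (Finsupp.mapDomain_support (Finsupp.mem_support_iff.mpr h))
          rw [this]; exact zero_mem _
      have hf'sum : f'.sum (fun _ x => x) = a := by
        rw [hf'def, Finsupp.sum_mapDomain_index (fun _ => rfl) (fun _ _ _ => rfl)]
        exact hgsum
      have hf'f : f' = f := hfuniq f' ⟨hf'B, hf'sum⟩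
      ext δ
      by_cases hδ : δ ∈ g.support
      · have h0 : g δ ≠ 0 := Finsupp.mem_support_iff.mp hδ
        obtain ⟨hσS, hσρ⟩ := hσ δ h0
        have e2 : f.mapDomain ρ (ρ (σ δ)) = f (σ δ) :=
          Finsupp.mapDomain_apply' S f hfS hρS hσS
        rw [hσρ] at e2
        rw [e2, ← hf'f, happ δ hδ]
      · have h0 : g δ = 0 := Finsupp.notMem_support_iff.mp hδ
        rw [h0]
        by_contra hne
        have hne' : f.mapDomain ρ δ ≠ 0 := fun h => hne h.symm
        obtain ⟨γ, hγ, rfl⟩ :=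
          Finset.mem_image.mp (Finsupp.mapDomain_support (Finsupp.mem_support_iff.mpr hne'))
        have hfne : f γ ≠ 0 := Finsupp.mem_support_iff.mp hγ
        have hf'ne : f' γ ≠ 0 := by rw [hf'f]; exact hfne
        obtain ⟨δ', hδ', rfl⟩ :=
          Finset.mem_image.mp (Finsupp.mapDomain_support (Finsupp.mem_support_iff.mpr hf'ne))
        have := (hσ δ' (Finsupp.mem_support_iff.mp hδ')).2
        rw [this] at hδ
        exact hδ hδ'
  · -- same homogeneous elements
    ext x
    simp only [Set.mem_iUnion, SetLike.mem_coe]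
    constructor
    · rintro ⟨γ, hx⟩
      by_cases hγ : γ ∈ S
      · exact ⟨ρ γ, by rw [hCeq γ hγ]; exact hx⟩
      · have hb : B γ = ⊥ := not_not.mp hγ
        rw [hb] at hx
        rw [AddSubgroup.mem_bot.mp hx]
        exact ⟨1, zero_mem _⟩
    · rintro ⟨δ, hx⟩
      by_cases h : ∃ s, s ∈ S ∧ ρ s = δ
      · refine ⟨h.choose, ?_⟩
        have : C δ = B h.choose := by rw [hCdef]; simp only [dif_pos h]
        rw [← this]; exact hx
      · rw [hCbot δ h] at hx
        rw [AddSubgroup.mem_bot.mp hx]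
        exact ⟨1, zero_mem _⟩
end

section
/- Let A be a commutative ring graded by an abelian group Γ via (B_γ)_{γ∈Γ}, such that A is either an order or a finite-dimensional commutative ℚ-algebra, and suppose A has no non-zero homogeneous nilpotent elements. Then: (i) if δ ∈ Γ has infinite order, then B_δ = 0; (ii) the subgroup of Γ generated by {γ : B_γ ≠ 0} is finite. -/
open Cardinal

theorem CommGroup.finite_closure_of_isOfFinOrder {G : Type*} [CommGroup G] {s : Set G}
    (hs : s.Finite) (h : ∀ g ∈ s, IsOfFinOrder g) : Finite (Subgroup.closure s) := by
  have : Finite s := hs.to_subtype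
  refine CommGroup.finite_of_fg_isMulTorsion _ fun g => Submonoid.isOfFinOrder_coe.1 ?_
  exact (Subgroup.closure_le (CommGroup.torsion G)).2 h g.2

theorem rank_int_lt_aleph0_of_finite_rat (M : Type*) [AddCommGroup M] [Module ℚ M]
    [Module.Finite ℚ M] : Module.rank ℤ M < ℵ₀ :=
  IsFractionRing.rank_right_eq ℤ ℚ M ▸ Module.rank_lt_aleph0 ℚ M

namespace IsGrading

variable {A Γ : Type*} [CommRing A] [CommGroup Γ] {B : Γ → AddSubgroup A}

theorem pow_succ_mem (hB : IsGrading B) {γ : Γ} {x : A} (hx : x ∈ B γ) (n : ℕ) :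
    x ^ (n + 1) ∈ B (γ ^ (n + 1)) := by
  induction n with
  | zero => simpa using hx
  | succ n ih => simpa only [pow_succ _ (n + 1)] using hB.1 _ _ _ ih _ hx

theorem iSupIndep_toIntSubmodule (hB : IsGrading B) :
    iSupIndep fun γ => (B γ).toIntSubmodule := by
  classical
  refine iSupIndep_def.2 fun γ => Submodule.disjoint_def.2 fun x hxγ hx => ?_
  obtain ⟨f, hf, hfx⟩ := (Submodule.mem_iSup_iff_exists_finsupp _ x).1 hx
  have hfγ : f γ = 0 := by simpa using hf γ
  have hfB : ∀ δ, f δ ∈ B δ := fun δ => by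
    rcases eq_or_ne δ γ with rfl | hδ
    · exact hfγ ▸ (B δ).zero_mem
    · exact (by simpa [hδ] using hf δ : f δ ∈ (B δ).toIntSubmodule)
  have hsingleB : ∀ δ, Finsupp.single γ x δ ∈ B δ := fun δ => by
    rcases eq_or_ne γ δ with rfl | hδ
    · rw [Finsupp.single_eq_same]
      exact hxγ
    · rw [Finsupp.single_eq_of_ne' hδ]
      exact (B δ).zero_mem
  have hf_eq : Finsupp.single γ x = f :=
    (hB.2 x).unique ⟨hsingleB, Finsupp.sum_single_index rfl⟩ ⟨hfB, hfx⟩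
  simpa [hfγ] using congr($hf_eq γ)

theorem finite_support [IsAddTorsionFree A] (hB : IsGrading B)
    (hrank : Module.rank ℤ A < ℵ₀) : {γ | B γ ≠ ⊥}.Finite := by
  have hcard := hB.iSupIndep_toIntSubmodule.subtype_ne_bot_le_rank
  have := lift_lt_aleph0.1 (hcard.trans_lt (lift_lt_aleph0.2 hrank))
  simp only [ne_eq, map_eq_bot_iff, lt_aleph0_iff_finite] at this
  exact this

theorem isOfFinOrder_of_not_isNilpotent (hB : IsGrading B) (hfin : {γ | B γ ≠ ⊥}.Finite)
    {δ : Γ} {x : A} (hx : x ∈ B δ) (hnil : ¬IsNilpotent x) : IsOfFinOrder δ := by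
  have hmem : ∀ n : ℕ, δ ^ (n + 1) ∈ {γ | B γ ≠ ⊥} := fun n hbot =>
    hnil ⟨n + 1, AddSubgroup.mem_bot.1 (hbot ▸ hB.pow_succ_mem hx n)⟩
  by_contra hδ
  exact Set.infinite_of_injective_forall_mem
    ((injective_pow_iff_not_isOfFinOrder.2 hδ).comp Nat.succ_injective) hmem hfin

end IsGrading

/-- If `A` is an order or a finite-dimensional commutative ℚ-algebra, graded by
an abelian group `Γ`, with no nonzero homogeneous nilpotents, then components
of degrees of infinite order vanish, and the subgroup generated by the support
of the grading is finite. -/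
theorem grading_support_closure_finite {A Γ : Type} [CommRing A] [CommGroup Γ]
    (B : Γ → AddSubgroup A) (hB : IsGrading B)
    (hA : (Module.Free ℤ A ∧ Module.Finite ℤ A) ∨
      (∃ inst : Algebra ℚ A, @Module.Finite ℚ A _ _ inst.toModule))
    (hnil : ∀ γ : Γ, ∀ x ∈ B γ, IsNilpotent x → x = 0) :
    (∀ δ : Γ, ¬ IsOfFinOrder δ → B δ = ⊥) ∧
      Finite (Subgroup.closure {γ : Γ | B γ ≠ ⊥}) := by
  obtain ⟨htf, hrank⟩ : IsAddTorsionFree A ∧ Module.rank ℤ A < ℵ₀ := by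
    rcases hA with ⟨_, _⟩ | ⟨inst, _⟩
    · exact ⟨IsAddTorsionFree.of_isTorsionFree ℤ A, Module.rank_lt_aleph0 ℤ A⟩
    · exact ⟨IsAddTorsionFree.of_module_rat A, rank_int_lt_aleph0_of_finite_rat A⟩
  have hsupp := hB.finite_support hrank
  have hvanish : ∀ δ : Γ, ¬ IsOfFinOrder δ → B δ = ⊥ := fun δ hδ => by
    refine (B δ).bot_or_exists_ne_zero.resolve_right ?_
    rintro ⟨x, hx, hx0⟩
    exact hδ (hB.isOfFinOrder_of_not_isNilpotent hsupp hx (mt (hnil δ x hx) hx0))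
  exact ⟨hvanish, CommGroup.finite_closure_of_isOfFinOrder hsupp fun γ hγ =>
    not_not.1 fun h => hγ (hvanish γ h)⟩
end

section
/- Let A be a commutative ring graded by a finite abelian group Γ via (B_γ)_{γ∈Γ}, and suppose that the additive group of A has no nonzero #Γ-torsion (i.e., (#Γ)x = 0 implies x = 0). Then the nilradical of A is a homogeneous ideal: if α = ∑_γ α_γ with α_γ ∈ B_γ is nilpotent, then each α_γ is nilpotent. -/
/-! Let `R = ℤ[ζ]` with `ζ` a primitive root of unity of order `exp Γ`. Every character
`χ : Γ →* Rˣ` twists the grading into a ring homomorphism `A →+* R ⊗ A`, `a ↦ ∑ χ γ ⊗ a_γ`,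
which sends the nilpotent `α` to a nilpotent element. Averaging these images against
`χ γ₀⁻¹`, orthogonality of characters leaves `1 ⊗ #Γ • α_γ₀`, which is therefore nilpotent.
As `R` is free over `ℤ`, `a ↦ 1 ⊗ a` is injective, so `#Γ • α_γ₀` is nilpotent in `A`, and the
absence of `#Γ`-torsion removes the factor `#Γ ^ k` from `(#Γ • α_γ₀) ^ k = 0`. -/

open scoped TensorProduct

namespace IsGrading

variable {A Γ : Type*} [CommRing A] [CommGroup Γ] {B : Γ → AddSubgroup A}

noncomputable def decompose (hB : IsGrading B) (a : A) : Γ →₀ A := (hB.2 a).exists.choose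

lemma decompose_mem (hB : IsGrading B) (a : A) (γ : Γ) : hB.decompose a γ ∈ B γ :=
  (hB.2 a).exists.choose_spec.1 γ

lemma sum_decompose (hB : IsGrading B) (a : A) : (hB.decompose a).sum (fun _ x => x) = a :=
  (hB.2 a).exists.choose_spec.2

lemma decompose_eq (hB : IsGrading B) {a : A} {f : Γ →₀ A} (hf : ∀ γ, f γ ∈ B γ)
    (hsum : f.sum (fun _ x => x) = a) : hB.decompose a = f :=
  (hB.2 a).unique ⟨hB.decompose_mem a, hB.sum_decompose a⟩ ⟨hf, hsum⟩

lemma decompose_of_mem (hB : IsGrading B) {x : A} {γ : Γ} (hx : x ∈ B γ) :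
    hB.decompose x = Finsupp.single γ x := by
  classical
  refine hB.decompose_eq (fun δ => ?_) (Finsupp.sum_single_index rfl)
  rw [Finsupp.single_apply]
  split_ifs with h
  · exact h ▸ hx
  · exact (B δ).zero_mem

lemma decompose_add (hB : IsGrading B) (a b : A) :
    hB.decompose (a + b) = hB.decompose a + hB.decompose b := by
  refine hB.decompose_eq (fun γ => add_mem (hB.decompose_mem a γ) (hB.decompose_mem b γ)) ?_
  rw [Finsupp.sum_add_index' (fun _ => rfl) (fun _ _ _ => rfl), hB.sum_decompose,
    hB.sum_decompose]

lemma decompose_mul_of_mem (hB : IsGrading B) {x : A} {δ : Γ} (hx : x ∈ B δ) (a : A) (γ : Γ) :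
    hB.decompose (x * a) (δ * γ) = x * hB.decompose a γ := by
  let f := ((hB.decompose a).mapRange (x * ·) (mul_zero x)).equivMapDomain (Equiv.mulLeft δ)
  have hf : ∀ γ, f γ = x * hB.decompose a (δ⁻¹ * γ) := fun γ => by
    simp [f, Finsupp.equivMapDomain_apply]
  have hfmem : ∀ γ, f γ ∈ B γ := fun γ => by
    simpa [hf] using hB.1 _ _ x hx _ (hB.decompose_mem a (δ⁻¹ * γ))
  have hfsum : f.sum (fun _ y => y) = x * a := by
    rw [Finsupp.sum_equivMapDomain, Finsupp.sum_mapRange_index (fun _ => rfl),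
      ← Finsupp.mul_sum, hB.sum_decompose]
  rw [hB.decompose_eq hfmem hfsum, hf, inv_mul_cancel_left]

theorem induction_on (hB : IsGrading B) {P : A → Prop} (a : A) (zero : P 0)
    (add : ∀ a b, P a → P b → P (a + b)) (mem : ∀ γ, ∀ x ∈ B γ, P x) : P a := by
  rw [← hB.sum_decompose a]
  exact Finset.sum_induction _ P add zero fun γ _ => mem γ _ (hB.decompose_mem a γ)

theorem one_mem (hB : IsGrading B) : (1 : A) ∈ B 1 := by
  set u := hB.decompose 1 1
  have hu : ∀ a : A, a * u = a := fun a => by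
    refine hB.induction_on (P := fun a => a * u = a) a (zero_mul u)
      (fun a b ha hb => by rw [add_mul, ha, hb]) fun δ x hx => ?_
    rw [← hB.decompose_mul_of_mem hx, mul_one, mul_one, hB.decompose_of_mem hx,
      Finsupp.single_eq_same]
  have hu1 : u = 1 := (one_mul u).symm.trans (hu 1)
  exact hu1 ▸ hB.decompose_mem 1 1

section Twist

variable {R : Type*} [CommRing R]

noncomputable def twistAddHom (hB : IsGrading B) (χ : Γ →* Rˣ) : A →+ R ⊗[ℤ] A :=
  AddMonoidHom.mk' (fun a => (hB.decompose a).sum fun γ x => (χ γ : R) ⊗ₜ[ℤ] x) fun a b => by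
    rw [hB.decompose_add, Finsupp.sum_add_index' (fun _ => TensorProduct.tmul_zero _ _)
      (fun _ _ _ => TensorProduct.tmul_add _ _ _)]

lemma twistAddHom_apply (hB : IsGrading B) (χ : Γ →* Rˣ) (a : A) :
    hB.twistAddHom χ a = (hB.decompose a).sum fun γ x => (χ γ : R) ⊗ₜ[ℤ] x :=
  rfl

lemma twistAddHom_of_mem (hB : IsGrading B) (χ : Γ →* Rˣ) {x : A} {γ : Γ} (hx : x ∈ B γ) :
    hB.twistAddHom χ x = (χ γ : R) ⊗ₜ[ℤ] x := by
  rw [twistAddHom_apply, hB.decompose_of_mem hx,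
    Finsupp.sum_single_index (by rw [TensorProduct.tmul_zero])]

lemma twistAddHom_mul (hB : IsGrading B) (χ : Γ →* Rˣ) (a b : A) :
    hB.twistAddHom χ (a * b) = hB.twistAddHom χ a * hB.twistAddHom χ b := by
  set T := hB.twistAddHom χ
  refine hB.induction_on (P := fun a => T (a * b) = T a * T b) a (by simp)
    (fun a a' h h' => by simp only [add_mul, map_add, h, h']) fun γ x hx => ?_
  refine hB.induction_on (P := fun b => T (x * b) = T x * T b) b (by simp)
    (fun b b' h h' => by simp only [mul_add, map_add, h, h']) fun δ y hy => ?_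
  rw [hB.twistAddHom_of_mem χ (hB.1 γ δ x hx y hy), hB.twistAddHom_of_mem χ hx,
    hB.twistAddHom_of_mem χ hy, Algebra.TensorProduct.tmul_mul_tmul, map_mul, Units.val_mul]

noncomputable def twist (hB : IsGrading B) (χ : Γ →* Rˣ) : A →+* R ⊗[ℤ] A :=
  { hB.twistAddHom χ with
    map_one' := (hB.twistAddHom_of_mem χ hB.one_mem).trans (by simp [Algebra.TensorProduct.one_def])
    map_mul' := hB.twistAddHom_mul χ }

lemma twist_sum (hB : IsGrading B) (χ : Γ →* Rˣ) {f : Γ →₀ A} (hf : ∀ γ, f γ ∈ B γ) :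
    hB.twist χ (f.sum fun _ x => x) = f.sum fun γ x => (χ γ : R) ⊗ₜ[ℤ] x := by
  change hB.twistAddHom χ _ = _
  rw [twistAddHom_apply, hB.decompose_eq hf rfl]

end Twist

end IsGrading

namespace CommGroup

lemma sum_apply_eq_ite_of_hasEnoughRootsOfUnity {G R : Type*} [CommGroup G] [Finite G]
    [CommRing R] [IsDomain R] [HasEnoughRootsOfUnity R (Monoid.exponent G)]
    [Fintype (G →* Rˣ)] [DecidableEq G] (g : G) :
    ∑ χ : G →* Rˣ, (χ g : R) = if g = 1 then (Nat.card G : R) else 0 := by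
  classical
  let ev : (G →* Rˣ) →* R := (Units.coeHom R).comp (MonoidHom.eval g)
  have hev : ev = 1 ↔ g = 1 := by
    simpa [MonoidHom.ext_iff, ev] using forall_apply_eq_apply_iff G (M := R) (g' := 1)
  refine (sum_hom_units ev).trans ?_
  simp only [hev, Fintype.card_eq_nat_card, card_monoidHom_of_hasEnoughRootsOfUnity, Nat.cast_ite,
    Nat.cast_zero]

end CommGroup

namespace AdjoinRoot

open _root_.Polynomial

variable (n : ℕ) [NeZero n]

instance isDomain_cyclotomic : IsDomain (AdjoinRoot (cyclotomic n ℤ)) :=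
  isDomain_of_prime (cyclotomic.irreducible (NeZero.pos n)).prime

instance free_cyclotomic : Module.Free ℤ (AdjoinRoot (cyclotomic n ℤ)) :=
  (cyclotomic.monic n ℤ).free_adjoinRoot

theorem isPrimitiveRoot_root_cyclotomic : IsPrimitiveRoot (root (cyclotomic n ℤ)) n := by
  have : CharZero (AdjoinRoot (cyclotomic n ℤ)) :=
    charZero_of_injective_algebraMap (FaithfulSMul.algebraMap_injective ℤ _)
  rw [← isRoot_cyclotomic_iff, ← map_cyclotomic n (of (cyclotomic n ℤ))]
  exact isRoot_root _

instance hasEnoughRootsOfUnity_cyclotomic :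
    HasEnoughRootsOfUnity (AdjoinRoot (cyclotomic n ℤ)) n :=
  ⟨⟨_, isPrimitiveRoot_root_cyclotomic n⟩, inferInstance⟩

end AdjoinRoot

namespace IsGrading

variable {A Γ : Type*} [CommRing A] [CommGroup Γ] [Fintype Γ] {B : Γ → AddSubgroup A}

lemma sum_smul_twist {R : Type*} [CommRing R] [IsDomain R]
    [HasEnoughRootsOfUnity R (Monoid.exponent Γ)] [Fintype (Γ →* Rˣ)] (hB : IsGrading B)
    {f : Γ →₀ A} (hf : ∀ γ, f γ ∈ B γ) (γ₀ : Γ) :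
    ∑ χ : Γ →* Rˣ, (χ γ₀⁻¹ : R) • hB.twist χ (f.sum fun _ x => x) =
      (1 : R) ⊗ₜ[ℤ] (Fintype.card Γ • f γ₀) := by
  classical
  calc ∑ χ : Γ →* Rˣ, (χ γ₀⁻¹ : R) • hB.twist χ (f.sum fun _ x => x)
      = ∑ γ, (∑ χ : Γ →* Rˣ, (χ (γ₀⁻¹ * γ) : R)) ⊗ₜ[ℤ] f γ := by
        simp_rw [hB.twist_sum _ hf, Finsupp.sum_fintype _ _ fun _ => TensorProduct.tmul_zero _ _,
          Finset.smul_sum, TensorProduct.smul_tmul', smul_eq_mul, ← Units.val_mul,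
          ← map_mul]
        rw [Finset.sum_comm]
        simp_rw [← TensorProduct.sum_tmul]
    _ = ∑ γ, (if γ₀⁻¹ * γ = 1 then (Nat.card Γ : R) else 0) ⊗ₜ[ℤ] f γ := by
        simp_rw [CommGroup.sum_apply_eq_ite_of_hasEnoughRootsOfUnity]
    _ = (1 : R) ⊗ₜ[ℤ] (Fintype.card Γ • f γ₀) := by
        simp_rw [inv_mul_eq_one, TensorProduct.ite_tmul, Finset.sum_ite_eq, Finset.mem_univ,
          if_true, Nat.card_eq_fintype_card, ← nsmul_one, TensorProduct.smul_tmul]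

theorem isNilpotent_card_smul_of_isNilpotent_sum (hB : IsGrading B) {f : Γ →₀ A}
    (hf : ∀ γ, f γ ∈ B γ) (hnil : IsNilpotent (f.sum fun _ x => x)) (γ₀ : Γ) :
    IsNilpotent (Fintype.card Γ • f γ₀) := by
  let R := AdjoinRoot (Polynomial.cyclotomic (Monoid.exponent Γ) ℤ)
  let := Fintype.ofFinite (Γ →* Rˣ)
  have h : IsNilpotent ((1 : R) ⊗ₜ[ℤ] (Fintype.card Γ • f γ₀)) := by
    rw [← hB.sum_smul_twist hf γ₀]
    exact isNilpotent_sum fun χ _ => (hnil.map (hB.twist χ)).smul _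
  exact (IsNilpotent.map_iff (F := A →ₐ[ℤ] R ⊗[ℤ] A) (f := Algebra.TensorProduct.includeRight)
    (Module.FaithfullyFlat.tensorProduct_mk_injective (A := ℤ) (B := R) A)).mp h

end IsGrading

/-- If a commutative ring `A` is graded by a finite abelian group `Γ` and the
additive group of `A` has no nonzero `#Γ`-torsion, then the nilradical of `A`
is homogeneous: the components of any nilpotent element are nilpotent. -/
theorem nilradical_homogeneous_of_torsionFree {A Γ : Type*} [CommRing A]
    [CommGroup Γ] [Fintype Γ]
    (B : Γ → AddSubgroup A) (hB : IsGrading B)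
    (htf : ∀ x : A, (Fintype.card Γ) • x = 0 → x = 0) :
    ∀ f : Γ →₀ A, (∀ γ, f γ ∈ B γ) →
      IsNilpotent (f.sum fun _ x => x) → ∀ γ : Γ, IsNilpotent (f γ) := by
  intro f hf hnil γ
  obtain ⟨k, hk⟩ := hB.isNilpotent_card_smul_of_isNilpotent_sum hf hnil γ
  refine ⟨k, ((IsSMulRegular.of_right_eq_zero_of_smul htf).pow k).right_eq_zero_of_smul ?_⟩
  rw [← smul_pow, hk]
end

section
/- Let Γ be a finite abelian group and A = ℤ[Γ] its integral group ring, with the inner product ⟨x,y⟩ = ∑_σ σ(x)·conj(σ(y)) over all ring homomorphisms σ : A → ℂ. Then for x = ∑_γ x_γ·γ with x_γ ∈ ℤ one has ⟨x,x⟩ = #Γ · ∑_γ x_γ². Consequently, every nonzero x satisfies ⟨x,x⟩ ≥ #Γ with equality if and only if x ∈ ±Γ, and the group of roots of unity of ℤ[Γ] equals ±Γ (Higman's theorem). -/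
/-!
Ring homomorphisms `ℤ[Γ] → ℂ` are the characters of `Γ`, extended linearly, so the orthogonality
relations for characters turn `⟨x, y⟩` into `#Γ · ∑ x_γ y_γ`. A sum of squares of integers is at
least `1` unless all of them vanish, and it is `1` exactly at `±γ`. A root of unity `x` has
`|σ x| = 1` for every `σ`, so `⟨x, x⟩` is the number of characters, namely `#Γ`, which forces
`x ∈ ±Γ`.
-/

/-- The natural inner product on a (reduced) order:
`⟨x, y⟩ = ∑ σ, σ x * conj (σ y)`, where `σ` ranges over all ring homomorphisms
`A → ℂ` (a finite set when `A` is a reduced order); the value is real. -/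
noncomputable def ordPairing (A : Type*) [CommRing A] (x y : A) : ℝ :=
  ∑ᶠ σ : A →+* ℂ, (σ x * (starRingEnd ℂ) (σ y)).re

open Finset MonoidAlgebra ComplexConjugate

namespace AddChar

variable {α : Type*} [AddCommGroup α] [Fintype α]

lemma sum_apply_mul_conj_apply [DecidableEq α] (a b : α) :
    ∑ ψ : AddChar α ℂ, ψ a * conj (ψ b) = if a = b then (Fintype.card α : ℂ) else 0 := by
  simp_rw [← map_neg_eq_conj, ← map_add_eq_mul, ← sub_eq_add_neg, sum_apply_eq_ite, sub_eq_zero]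

lemma sum_mul_conj_eq_card_mul_sum (f g : α → ℂ) :
    ∑ ψ : AddChar α ℂ, (∑ a, f a * ψ a) * conj (∑ b, g b * ψ b)
      = Fintype.card α * ∑ a, f a * conj (g a) := by
  classical
  calc _ = ∑ a, ∑ b, f a * conj (g b) * ∑ ψ : AddChar α ℂ, ψ a * conj (ψ b) := by
        simp_rw [map_sum, map_mul, sum_mul_sum, mul_sum]
        rw [sum_comm]
        refine sum_congr rfl fun a _ => ?_
        rw [sum_comm]
        exact sum_congr rfl fun b _ => sum_congr rfl fun ψ _ => by ring
    _ = _ := by simp [sum_apply_mul_conj_apply, mul_sum, mul_comm]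

end AddChar

lemma IsOfFinOrder.ordPairing_self_eq_natCard {A : Type*} [CommRing A] [Finite (A →+* ℂ)] {x : A}
    (hx : IsOfFinOrder x) : ordPairing A x x = Nat.card (A →+* ℂ) := by
  have : Fintype (A →+* ℂ) := Fintype.ofFinite _
  have hσ (σ : A →+* ℂ) : σ x * conj (σ x) = 1 := by
    have hnorm : ‖σ x‖ = 1 := (σ.toMonoidHom.isOfFinOrder hx).norm_eq_one
    simp [Complex.mul_conj, Complex.normSq_eq_norm_sq, hnorm]
  simp [ordPairing, finsum_eq_sum_of_fintype, hσ]

namespace Finsupp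

variable {ι : Type*} [Fintype ι]

lemma one_le_sum_sq {f : ι →₀ ℤ} (hf : f ≠ 0) : 1 ≤ ∑ i, f i ^ 2 := by
  obtain ⟨i, hi⟩ := Finsupp.ne_iff.1 hf
  calc 1 ≤ f i ^ 2 := (one_le_sq_iff_one_le_abs _).2 (Int.one_le_abs hi)
    _ ≤ ∑ j, f j ^ 2 := Finset.single_le_sum (fun j _ => sq_nonneg (f j)) (mem_univ i)

lemma sum_sq_eq_one_iff {f : ι →₀ ℤ} :
    ∑ i, f i ^ 2 = 1 ↔ ∃ i, f = single i 1 ∨ f = single i (-1) := by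
  classical
  constructor
  · intro h
    obtain ⟨i, hi⟩ := Finsupp.ne_iff.1 (show f ≠ 0 by rintro rfl; simp at h)
    have hsplit := Finset.add_sum_erase univ (fun j => f j ^ 2) (mem_univ i)
    have hi_sq : 1 ≤ f i ^ 2 := (one_le_sq_iff_one_le_abs _).2 (Int.one_le_abs hi)
    have hrest_sum : ∑ j ∈ univ.erase i, f j ^ 2 = 0 :=
      le_antisymm (by linarith) (Finset.sum_nonneg fun j _ => sq_nonneg (f j))
    have hrest := (Finset.sum_eq_zero_iff_of_nonneg fun j _ => sq_nonneg (f j)).1 hrest_sum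
    have hf : f = single i (f i) := by
      ext j
      by_cases hj : j = i
      · simp [hj]
      · simpa [single_apply, Ne.symm hj] using hrest j (by simp [hj])
    have hi_eq : f i ^ 2 = 1 := by linarith
    rcases sq_eq_one_iff.1 hi_eq with h1 | h1 <;> rw [h1] at hf
    exacts [⟨i, .inl hf⟩, ⟨i, .inr hf⟩]
  · rintro ⟨i, rfl | rfl⟩ <;> simp [single_apply, ite_pow]

end Finsupp

namespace MonoidAlgebra

lemma isOfFinOrder_single {R M : Type*} [Semiring R] [Monoid M] {m : M} {r : R}
    (hm : IsOfFinOrder m) (hr : IsOfFinOrder r) : IsOfFinOrder (single m r) :=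
  (singleHom (R := R) (M := M)).isOfFinOrder (x := (r, m)) (hr.prod_mk hm)

section Monoid

variable {Γ : Type*} [Monoid Γ]

/-- Characters are taken on `Additive Γ`, where Mathlib's orthogonality relations live. -/
noncomputable def ringHomEquivAddChar : (MonoidAlgebra ℤ Γ →+* ℂ) ≃ AddChar (Additive Γ) ℂ :=
  (RingHom.equivIntAlgHom _ _).trans <| (lift ℤ ℂ Γ).symm.trans <|
    MonoidHom.toAdditive.trans AddChar.toAddMonoidHomEquiv.symm

variable [Fintype Γ]

lemma ringHomEquivAddChar_symm_apply (ψ : AddChar (Additive Γ) ℂ) (x : MonoidAlgebra ℤ Γ) :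
    ringHomEquivAddChar.symm ψ x = ∑ a : Additive Γ, (x.coeff a.toMul : ℂ) * ψ a := by
  change lift ℤ ℂ Γ _ x = _
  rw [lift_apply, Finsupp.sum_fintype _ _ (by simp)]
  simp only [zsmul_eq_mul]
  exact Fintype.sum_equiv Additive.ofMul _ _ fun _ => rfl

end Monoid

variable {Γ : Type*} [CommGroup Γ] [Fintype Γ]

instance : Finite (MonoidAlgebra ℤ Γ →+* ℂ) := .of_equiv _ ringHomEquivAddChar.symm

lemma natCard_ringHom_eq_card : Nat.card (MonoidAlgebra ℤ Γ →+* ℂ) = Fintype.card Γ := by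
  rw [Nat.card_congr ringHomEquivAddChar, Nat.card_eq_fintype_card, AddChar.card_eq,
    Fintype.card_additive]

lemma ordPairing_eq_card_mul_sum (x y : MonoidAlgebra ℤ Γ) :
    ordPairing (MonoidAlgebra ℤ Γ) x y
      = Fintype.card Γ * ∑ γ : Γ, (x.coeff γ : ℝ) * y.coeff γ := by
  rw [ordPairing, ← finsum_comp_equiv ringHomEquivAddChar.symm, finsum_eq_sum_of_fintype,
    ← Complex.re_sum]
  simp_rw [ringHomEquivAddChar_symm_apply, AddChar.sum_mul_conj_eq_card_mul_sum]
  rw [Fintype.card_additive, Fintype.sum_equiv Additive.toMul _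
    (fun γ => (x.coeff γ : ℂ) * conj (y.coeff γ : ℂ)) fun _ => rfl]
  simp

lemma ordPairing_self_eq_card_mul_sum_sq (x : MonoidAlgebra ℤ Γ) :
    ordPairing (MonoidAlgebra ℤ Γ) x x = Fintype.card Γ * ((∑ γ : Γ, x.coeff γ ^ 2 : ℤ) : ℝ) := by
  simp [ordPairing_eq_card_mul_sum, sq]

lemma card_le_ordPairing_self {x : MonoidAlgebra ℤ Γ} (hx : x ≠ 0) :
    (Fintype.card Γ : ℝ) ≤ ordPairing (MonoidAlgebra ℤ Γ) x x := by
  have hsum := Finsupp.one_le_sum_sq (coeff_eq_zero.not.2 hx)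
  rw [ordPairing_self_eq_card_mul_sum_sq]
  exact le_mul_of_one_le_right (by positivity) (by exact_mod_cast hsum)

lemma ordPairing_self_eq_card_iff {x : MonoidAlgebra ℤ Γ} :
    ordPairing (MonoidAlgebra ℤ Γ) x x = Fintype.card Γ ↔
      ∃ γ : Γ, x = single γ (1 : ℤ) ∨ x = single γ (-1 : ℤ) := by
  rw [ordPairing_self_eq_card_mul_sum_sq, mul_eq_left₀ (by positivity), Int.cast_eq_one,
    Finsupp.sum_sq_eq_one_iff]
  simp_rw [← coeff_inj, coeff_single]

end MonoidAlgebra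

/-- Higman's theorem for `ℤ[Γ]`, `Γ` finite abelian: the norm formula
`⟨x,x⟩ = #Γ · ∑ x_γ²`, the resulting lower bound `⟨x,x⟩ ≥ #Γ` for `x ≠ 0` with
equality iff `x ∈ ±Γ`, and the conclusion that the roots of unity of `ℤ[Γ]`
are exactly `±Γ`. -/
theorem higman_groupRing {Γ : Type} [CommGroup Γ] [Fintype Γ] :
    (∀ x : MonoidAlgebra ℤ Γ,
      ordPairing (MonoidAlgebra ℤ Γ) x x
        = (Fintype.card Γ : ℝ) * ∑ γ : Γ, ((x.coeff γ : ℤ) : ℝ) ^ 2) ∧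
    (∀ x : MonoidAlgebra ℤ Γ, x ≠ 0 →
      ((Fintype.card Γ : ℝ) ≤ ordPairing (MonoidAlgebra ℤ Γ) x x ∧
        (ordPairing (MonoidAlgebra ℤ Γ) x x = (Fintype.card Γ : ℝ) ↔
          ∃ γ : Γ, x = MonoidAlgebra.single γ (1 : ℤ) ∨
            x = MonoidAlgebra.single γ (-1 : ℤ)))) ∧
    (∀ x : MonoidAlgebra ℤ Γ, (∃ n : ℕ, 0 < n ∧ x ^ n = 1) ↔
      ∃ γ : Γ, x = MonoidAlgebra.single γ (1 : ℤ) ∨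
        x = MonoidAlgebra.single γ (-1 : ℤ)) := by
  refine ⟨fun x => by simpa only [sq] using ordPairing_eq_card_mul_sum x x,
    fun x hx => ⟨card_le_ordPairing_self hx, ordPairing_self_eq_card_iff⟩, fun x => ?_⟩
  rw [← isOfFinOrder_iff_pow_eq_one]
  refine ⟨fun hx => ordPairing_self_eq_card_iff.1 ?_, ?_⟩
  · rw [hx.ordPairing_self_eq_natCard, natCard_ringHom_eq_card]
  · have hneg_one : IsOfFinOrder (-1 : ℤ) := isOfFinOrder_iff_pow_eq_one.2 ⟨2, two_pos, by norm_num⟩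
    rintro ⟨γ, rfl | rfl⟩
    exacts [isOfFinOrder_single (isOfFinOrder_of_finite γ) .one,
      isOfFinOrder_single (isOfFinOrder_of_finite γ) hneg_one]
end

section
/- Let A be an order graded by an abelian group Γ via (B_γ)_{γ∈Γ}. Then every idempotent of A lies in B_1, i.e., Id(A) = Id(B_1); consequently A is connected if and only if B_1 is connected. -/
theorem IsIdempotentElem.sub_pow_three {R : Type*} [CommRing R] {e f : R}
    (he : IsIdempotentElem e) (hf : IsIdempotentElem f) : (e - f) ^ 3 = e - f := by
  linear_combination (e + 1 - 3 * f) * he.eq + (3 * e - f - 1) * hf.eq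

theorem pow_dvd_of_pow_three_eq_self {M : Type*} [CommMonoid M] {a d : M} (hd : d ^ 3 = d)
    {n : ℕ} (ha : a ∣ d ^ n) (m : ℕ) : a ^ m ∣ d := by
  have hodd : ∀ j : ℕ, d ^ (2 * j + 1) = d := by
    intro j
    induction j with
    | zero => simp
    | succ j ih => rw [show 2 * (j + 1) + 1 = 2 * j + 1 + 2 by ring, pow_add, ih, ← pow_succ', hd]
  calc a ^ m ∣ (d ^ n) ^ m := pow_dvd_pow_of_dvd ha m
    _ ∣ (d ^ n) ^ m * ((d ^ n) ^ m * d) := dvd_mul_right _ _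
    _ = d ^ (2 * (n * m) + 1) := by rw [← mul_assoc, ← pow_mul, ← pow_add, ← pow_succ, two_mul]
    _ = d := hodd _

theorem natCast_dvd_sub_one_pow_of_pow_eq_one {R : Type*} [CommRing R] {p : ℕ} (hp : p.Prime)
    (k : ℕ) {u : R} (hu : u ^ p ^ k = 1) : (p : R) ∣ (u - 1) ^ p ^ k := by
  obtain ⟨r, hr⟩ := exists_add_pow_prime_pow_eq hp u (-1) k
  rw [sub_eq_add_neg, hr, hu]
  rcases Nat.even_or_odd (p ^ k) with heven | hodd
  · have hp2 : p = 2 := hp.even_iff.mp (Nat.even_pow.mp heven).1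
    rw [heven.neg_one_pow]
    exact ⟨1 - u * r, by subst hp2; push_cast; ring⟩
  · rw [hodd.neg_one_pow]
    exact ⟨-(u * r), by ring⟩

theorem eq_zero_of_forall_natCast_pow_dvd {S : Type*} [Ring S] [Module.Free ℤ S] {p : ℕ}
    (hp : p ≠ 1) {x : S} (h : ∀ m : ℕ, (p : S) ^ m ∣ x) : x = 0 := by
  set b := Module.Free.chooseBasis ℤ S
  refine b.ext_elem fun i => ?_
  rw [map_zero, Finsupp.coe_zero, Pi.zero_apply]
  by_contra hx
  obtain ⟨n, hn⟩ := (Int.finiteMultiplicity_iff (a := p)).mpr ⟨by simpa using hp, hx⟩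
  apply hn
  obtain ⟨y, rfl⟩ := h (n + 1)
  refine ⟨b.repr y i, ?_⟩
  rw [← Int.cast_natCast, ← Int.cast_pow, ← zsmul_eq_mul, map_zsmul, Finsupp.smul_apply,
    smul_eq_mul]

namespace MonoidAlgebra

variable {R G : Type*} [CommRing R]

variable (R G) in
noncomputable def augmentation [Monoid G] : MonoidAlgebra R G →ₐ[R] R := lift R R G 1

theorem augmentation_apply [Monoid G] (x : MonoidAlgebra R G) :
    augmentation R G x = x.coeff.sum fun _ r => r := by
  simp [augmentation, lift_apply]

theorem sub_one_dvd_sub_single_augmentation [Monoid G] {g : G}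
    (hg : ∀ c : G, ∃ n : ℕ, g ^ n = c) (x : MonoidAlgebra R G) :
    of R G g - 1 ∣ x - single 1 (augmentation R G x) := by
  induction x using induction_linear with
  | zero => simp
  | add x y hx hy =>
    rw [map_add, single_add, add_sub_add_comm]
    exact dvd_add hx hy
  | single c r =>
    obtain ⟨n, rfl⟩ := hg c
    have h : single (g ^ n) r - single 1 (augmentation R G (single (g ^ n) r))
        = (of R G g ^ n - 1) * single 1 r := by
      simp [augmentation, sub_mul, single_mul_single]
    rw [h]
    exact (sub_one_dvd_pow_sub_one _ n).mul_right _

theorem eq_single_augmentation_of_isIdempotentElem [Module.Free ℤ R] {p k : ℕ} (hp : p.Prime)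
    {x : MonoidAlgebra R (Multiplicative (ZMod (p ^ k)))} (hx : IsIdempotentElem x) :
    x = single 1 (augmentation R _ x) := by
  have : NeZero (p ^ k) := ⟨pow_ne_zero k hp.ne_zero⟩
  set g : Multiplicative (ZMod (p ^ k)) := Multiplicative.ofAdd 1
  have hgen : ∀ c, ∃ n : ℕ, g ^ n = c := fun c =>
    ⟨c.toAdd.val, by simp [g, ← ofAdd_nsmul]⟩
  set d := x - single 1 (augmentation R _ x)
  have hd3 : d ^ 3 = d :=
    hx.sub_pow_three ((hx.map (augmentation R _)).map singleOneRingHom)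
  have hdp : (p : MonoidAlgebra R _) ∣ d ^ p ^ k := by
    have hgq : of R _ g ^ p ^ k = 1 := by
      rw [← map_pow, ← ofAdd_nsmul, nsmul_one, ZMod.natCast_self, ofAdd_zero,
        map_one]
    exact (natCast_dvd_sub_one_pow_of_pow_eq_one hp k hgq).trans
      (pow_dvd_pow_of_dvd (sub_one_dvd_sub_single_augmentation hgen x) _)
  have : Module.Free ℤ (MonoidAlgebra R (Multiplicative (ZMod (p ^ k)))) :=
    Module.Free.of_equiv (coeffLinearEquiv ℤ).symm
  exact sub_eq_zero.mp
    (eq_zero_of_forall_natCast_pow_dvd hp.ne_one (pow_dvd_of_pow_three_eq_self hd3 hdp))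

theorem sum_coeff_fiber_eq_zero_of_isIdempotentElem [Monoid G] [Module.Free ℤ R] {p k : ℕ}
    (hp : p.Prime) {x : MonoidAlgebra R G} (hx : IsIdempotentElem x)
    (φ : G →* Multiplicative (ZMod (p ^ k))) {g₀ : G} (hg₀ : φ g₀ ≠ 1) :
    ∑ g ∈ x.coeff.support with φ g = φ g₀, x.coeff g = 0 := by
  classical
  have h := congrArg (fun y => y.coeff (φ g₀))
    (eq_single_augmentation_of_isIdempotentElem hp (hx.map (mapDomainRingHom R φ)))
  simpa [Finsupp.mapDomain_apply_eq_sum, Finsupp.single_apply, hg₀.symm] using h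

theorem isIdempotentElem_comapDomain_subtype [Group G] {H : Subgroup G} {x : MonoidAlgebra R G}
    (hx : IsIdempotentElem x) (hxH : ↑x.coeff.support ⊆ (H : Set G)) :
    IsIdempotentElem (comapDomain ((↑) : H → G) Subtype.val_injective x) := by
  have hmap : mapDomainRingHom R H.subtype (comapDomain _ Subtype.val_injective x) = x :=
    mapDomain_comapDomain (by simpa using hxH) _
  refine mapDomain_injective (R := R) Subtype.val_injective ?_
  change mapDomainRingHom R H.subtype _ = mapDomainRingHom R H.subtype _
  rw [map_mul, hmap]
  exact hx

end MonoidAlgebra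

theorem intCast_zmod_two_pow_natAbs_ne_zero {m : ℤ} (hm : m ≠ 0) :
    (m : ZMod (2 ^ m.natAbs)) ≠ 0 := by
  rw [Ne, ZMod.intCast_zmod_eq_zero_iff_dvd]
  refine fun h => hm (Int.eq_zero_of_abs_lt_dvd h ?_)
  rw [Int.abs_eq_natAbs]
  exact_mod_cast Nat.lt_two_pow_self

theorem exists_monoidHom_zmod_primePow_ne_one {G : Type*} [CommGroup G] [Group.FG G] {g : G}
    (hg : g ≠ 1) : ∃ p k : ℕ, p.Prime ∧ ∃ φ : G →* Multiplicative (ZMod (p ^ k)), φ g ≠ 1 := by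
  obtain ⟨ι, j, _, _, p, hp, e, ⟨E⟩⟩ := CommGroup.equiv_free_prod_prod_multiplicative_zmod G
  have hEg : E g ≠ 1 := by simpa using hg
  by_cases hfree : (E g).1 = 1
  · have htors : (E g).2 ≠ 1 := fun h => hEg (Prod.ext hfree h)
    obtain ⟨i, hi⟩ := Function.ne_iff.mp htors
    exact ⟨p i, e i, hp i, (Pi.evalMonoidHom _ i).comp ((MonoidHom.snd _ _).comp E.toMonoidHom),
      hi⟩
  · obtain ⟨i, hi⟩ := Function.ne_iff.mp hfree
    set m : ℤ := ((E g).1 i).toAdd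
    refine ⟨2, m.natAbs, Nat.prime_two, (AddMonoidHom.toMultiplicative (Int.castAddHom _)).comp
      ((Pi.evalMonoidHom _ i).comp ((MonoidHom.fst _ _).comp E.toMonoidHom)), ?_⟩
    simpa using intCast_zmod_two_pow_natAbs_ne_zero (m := m) hi

namespace IsGrading

variable {A Γ : Type*} [CommRing A] [CommGroup Γ] {B : Γ → AddSubgroup A}

theorem eq_zero_of_sum_eq_zero (hB : IsGrading B) {f : Γ →₀ A} (hf : ∀ γ, f γ ∈ B γ)
    (hsum : f.sum (fun _ a => a) = 0) : f = 0 := by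
  obtain ⟨z, -, hz⟩ := hB.2 0
  exact (hz f ⟨hf, hsum⟩).trans (hz 0 ⟨fun γ => (B γ).zero_mem, Finsupp.sum_zero_index⟩).symm

theorem eq_zero_of_sum_eq_zero_of_injective (hB : IsGrading B) {ι : Type*} {i : ι → Γ}
    (hi : Function.Injective i) {f : ι →₀ A} (hf : ∀ a, f a ∈ B (i a))
    (hsum : f.sum (fun _ a => a) = 0) : f = 0 := by
  classical
  have hmap : f.mapDomain i = 0 := by
    refine hB.eq_zero_of_sum_eq_zero (fun γ => ?_) ?_
    · by_cases hγ : γ ∈ Set.range i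
      · obtain ⟨a, rfl⟩ := hγ
        rw [Finsupp.mapDomain_apply hi]
        exact hf a
      · rw [Finsupp.mapDomain_of_notMem_range _ _ hγ]
        exact (B γ).zero_mem
    · rwa [Finsupp.sum_mapDomain_index (fun _ => rfl) (fun _ _ _ => rfl)]
  exact Finsupp.mapDomain_injective hi (hmap.trans Finsupp.mapDomain_zero.symm)

theorem isIdempotentElem_ofCoeff (hB : IsGrading B) {f : Γ →₀ A} (hf : ∀ γ, f γ ∈ B γ)
    (he : IsIdempotentElem (f.sum fun _ a => a)) :
    IsIdempotentElem (MonoidAlgebra.ofCoeff f) := by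
  classical
  set x := MonoidAlgebra.ofCoeff f
  have hmul : ∀ γ, (x * x).coeff γ ∈ B γ := fun γ => by
    rw [MonoidAlgebra.coeff_mul]
    refine sum_mem fun γ₁ _ => sum_mem fun γ₂ _ => ?_
    dsimp only
    split_ifs with h
    · exact h ▸ hB.1 _ _ _ (hf γ₁) _ (hf γ₂)
    · exact (B γ).zero_mem
  rw [← MonoidAlgebra.augmentation_apply] at he
  have hsub : (x * x - x).coeff = 0 :=
    hB.eq_zero_of_sum_eq_zero (fun γ => sub_mem (hmul γ) (hf γ))
      (by rw [← MonoidAlgebra.augmentation_apply, map_sub, map_mul, he, sub_self])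
  exact sub_eq_zero.mp (MonoidAlgebra.coeff_eq_zero.mp hsub)

theorem apply_eq_zero_of_isIdempotentElem [Module.Free ℤ A] (hB : IsGrading B) {f : Γ →₀ A}
    (hf : ∀ γ, f γ ∈ B γ) (he : IsIdempotentElem (f.sum fun _ a => a)) {γ₀ : Γ} (hγ₀ : γ₀ ≠ 1) :
    f γ₀ = 0 := by
  classical
  by_contra hne
  set H := Subgroup.closure (f.support : Set Γ)
  have : Group.FG H := (Group.fg_iff_subgroup_fg H).mpr ⟨f.support, rfl⟩
  set x := MonoidAlgebra.comapDomain ((↑) : H → Γ) Subtype.val_injective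
    (MonoidAlgebra.ofCoeff f)
  have hx : IsIdempotentElem x := MonoidAlgebra.isIdempotentElem_comapDomain_subtype
    (hB.isIdempotentElem_ofCoeff hf he) Subgroup.subset_closure
  set h₀ : H := ⟨γ₀, Subgroup.subset_closure (Finsupp.mem_support_iff.mpr hne)⟩
  obtain ⟨p, k, hp, φ, hφ⟩ := exists_monoidHom_zmod_primePow_ne_one (g := h₀)
    (by simpa [h₀, Subtype.ext_iff] using hγ₀)
  have hfiber := MonoidAlgebra.sum_coeff_fiber_eq_zero_of_isIdempotentElem hp hx φ hφ
  have hzero : x.coeff.filter (φ · = φ h₀) = 0 :=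
    hB.eq_zero_of_sum_eq_zero_of_injective Subtype.val_injective (fun h => ?_) ?_
  · exact hne (by simpa [x, h₀, MonoidAlgebra.coeff_comapDomain] using
      DFunLike.congr_fun hzero h₀)
  · rw [Finsupp.filter_apply]
    split_ifs
    · simpa [x, MonoidAlgebra.coeff_comapDomain] using hf h
    · exact (B h).zero_mem
  · rwa [Finsupp.sum_filter_index, Finsupp.support_filter]

theorem mem_one_of_isIdempotentElem [Module.Free ℤ A] (hB : IsGrading B) {e : A}
    (he : IsIdempotentElem e) : e ∈ B 1 := by
  obtain ⟨f, ⟨hf, rfl⟩, -⟩ := hB.2 e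
  rw [Finsupp.sum_eq_single (f := f) 1
    (fun γ _ hγ => hB.apply_eq_zero_of_isIdempotentElem hf he hγ) (fun _ => rfl)]
  exact hf 1

end IsGrading

theorem idempotents_in_degree_one_general {A Γ : Type*} [CommRing A]
    [Module.Free ℤ A] [CommGroup Γ]
    (B : Γ → AddSubgroup A) (hB : IsGrading B) :
    (∀ e : A, IsIdempotentElem e → e ∈ B 1) ∧
    (((0 : A) ≠ 1 ∧ ∀ e : A, IsIdempotentElem e → e = 0 ∨ e = 1) ↔
      ((0 : A) ≠ 1 ∧ ∀ e ∈ B 1, IsIdempotentElem e → e = 0 ∨ e = 1)) := by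
  have hmem : ∀ e : A, IsIdempotentElem e → e ∈ B 1 := fun _ he =>
    hB.mem_one_of_isIdempotentElem he
  exact ⟨hmem, and_congr_right fun _ =>
    ⟨fun h e _ he => h e he, fun h e he => h e (hmem e he) he⟩⟩

/-- In a graded order, all idempotents lie in the degree-one component, so
`Id(A) = Id(B 1)`; consequently `A` is connected iff `B 1` is connected. -/
theorem idempotents_in_degree_one {A Γ : Type*} [CommRing A]
    [Module.Free ℤ A] [Module.Finite ℤ A] [CommGroup Γ]
    (B : Γ → AddSubgroup A) (hB : IsGrading B) :
    (∀ e : A, IsIdempotentElem e → e ∈ B 1) ∧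
    (((0 : A) ≠ 1 ∧ ∀ e : A, IsIdempotentElem e → e = 0 ∨ e = 1) ↔
      ((0 : A) ≠ 1 ∧ ∀ e ∈ B 1, IsIdempotentElem e → e = 0 ∨ e = 1)) :=
  idempotents_in_degree_one_general B hB
end

section
/- Let Γ be a finite abelian group of prime-power order p^m and exponent q, let A be a Dedekind order (the ring of integers of a number field) with a Γ-grading (B_γ)_{γ∈Γ} such that each B_γ ⊗ ℚ is one-dimensional over the field B_1 ⊗ ℚ. Then Γ is cyclic. -/
open Module UniqueFactorizationMonoid

theorem UniqueFactorizationMonoid.exists_forall_dvd_pow_iff_dvd {α : Type*}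
    [CommMonoidWithZero α] [NormalizationMonoid α] [UniqueFactorizationMonoid α]
    [Subsingleton αˣ] {a : α} (ha : a ≠ 0) {q : ℕ} (hq : q ≠ 0) :
    ∃ c : α, ∀ x : α, a ∣ x ^ q ↔ c ∣ x := by
  classical
  have : Nontrivial α := ⟨⟨a, 0, ha⟩⟩
  set F := Multiset.toFinsupp (normalizedFactors a)
  -- `c = ∏ P ^ ⌈v_P(a) / q⌉`, and `⌈v / q⌉ ≤ w ↔ v ≤ q * w` is the whole argument
  set C := Finsupp.toMultiset (F ⌈/⌉ q)
  have hprime : ∀ P ∈ C, Prime P := by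
    intro P hP
    have hPF : P ∈ F.support :=
      Finsupp.support_ceilDiv_subset ((Finsupp.mem_toMultiset _ _).mp hP)
    rw [Multiset.toFinsupp_support, Multiset.mem_toFinset] at hPF
    exact prime_of_normalized_factor P hPF
  refine ⟨C.prod, fun x => ?_⟩
  rcases eq_or_ne x 0 with rfl | hx
  · simp [zero_pow hq]
  rw [dvd_iff_normalizedFactors_le_normalizedFactors ha (pow_ne_zero q hx),
    dvd_iff_normalizedFactors_le_normalizedFactors
      (Multiset.prod_ne_zero fun h => (hprime 0 h).ne_zero rfl) hx,
    normalizedFactors_prod_of_prime hprime, normalizedFactors_pow,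
    ← Multiset.toFinsupp_toMultiset (normalizedFactors x),
    ← Multiset.toFinsupp_toMultiset (normalizedFactors a), ← map_nsmul]
  simp only [C, F, ← Finsupp.coe_orderIsoMultiset, OrderIso.le_iff_le]
  exact (ceilDiv_le_iff_le_smul (β := α →₀ ℕ) (Nat.pos_of_ne_zero hq)).symm

namespace Ideal

variable {A : Type*} [CommRing A] [IsDedekindDomain A] [Module.Free ℤ A] [Module.Finite ℤ A]

theorem exists_absNorm_le_absNorm_pow_of_pow_mem {I : Ideal A} (hI : I ≠ ⊥) {q : ℕ} (hq : q ≠ 0) :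
    ∃ J : Ideal A, (∀ x, x ^ q ∈ I → x ∈ J) ∧ absNorm I ≤ absNorm J ^ q := by
  obtain ⟨J, hJ⟩ := exists_forall_dvd_pow_iff_dvd hI hq
  have hJ0 : J ≠ ⊥ := ne_zero_of_dvd_ne_zero hI ((hJ I).1 (dvd_pow_self I hq))
  refine ⟨J, fun x hx => ?_, ?_⟩
  · rwa [← span_singleton_le_iff_mem, ← dvd_iff_le, ← hJ, span_singleton_pow, dvd_iff_le,
      span_singleton_le_iff_mem]
  · rw [← map_pow]
    exact Nat.le_of_dvd (pos_of_ne_zero (absNorm_eq_zero_iff.not.mpr (pow_ne_zero q hJ0)))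
      (map_dvd absNorm ((hJ J).2 dvd_rfl))

theorem charP_quotient_span_natCast (hA : 0 < finrank ℤ A) (p : ℕ)
    [hp : Fact p.Prime] : CharP (A ⧸ span {(p : A)}) p :=
  CharP.quotient A p fun hu => by
    rw [← span_singleton_eq_top, ← absNorm_eq_one_iff, absNorm_span_natCast] at hu
    exact (Nat.one_lt_pow hA.ne' hp.out.one_lt).ne' hu

end Ideal

theorem AddMonoidHom.card_range_le_pow_finrank {M S : Type*} [AddCommGroup M] [Module.Free ℤ M]
    [Module.Finite ℤ M] [AddCommGroup S] {n : ℕ} [NeZero n] [Module (ZMod n) S] (f : M →+ S) :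
    Nat.card f.range ≤ n ^ finrank ℤ M := by
  let b := Module.Free.chooseBasis ℤ M
  let g : (Module.Free.ChooseBasisIndex ℤ M → ZMod n) → S := fun c => ∑ i, c i • f (b i)
  have hfg : (f.range : Set S) ⊆ Set.range g := by
    rintro _ ⟨m, rfl⟩
    refine ⟨fun i => (b.repr m i : ZMod n), ?_⟩
    simp only [g, Int.cast_smul_eq_zsmul, ← map_zsmul, ← map_sum, b.sum_repr]
  calc Nat.card f.range ≤ Nat.card (Set.range g) := Nat.card_mono (Set.finite_range g) hfg
    _ ≤ Nat.card (Module.Free.ChooseBasisIndex ℤ M → ZMod n) := Finite.card_range_le g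
    _ = n ^ finrank ℤ M := by simp [finrank_eq_card_chooseBasisIndex]

theorem RingHom.card_quotient_le_card_range {A S : Type*} [CommRing A] [Ring S] (ψ : A →+* S)
    [_root_.Finite ψ.range] {J : Ideal A} (h : RingHom.ker ψ ≤ J) :
    Nat.card (A ⧸ J) ≤ Nat.card ψ.range := by
  have : _root_.Finite (A ⧸ RingHom.ker ψ) := .of_equiv _ ψ.quotientKerEquivRange.symm.toEquiv
  rw [← Nat.card_congr ψ.quotientKerEquivRange.toEquiv]
  exact Nat.card_le_card_of_surjective _ (Ideal.Quotient.factor_surjective h)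

namespace IsGrading

variable {A Γ : Type*} [CommRing A] [CommGroup Γ] {B : Γ → AddSubgroup A}

theorem mul_mem (hB : IsGrading B) {γ δ : Γ} {x y : A} (hx : x ∈ B γ) (hy : y ∈ B δ) :
    x * y ∈ B (γ * δ) :=
  hB.1 γ δ x hx y hy

theorem pow_mem (hB : IsGrading B) {γ : Γ} {x : A} (hx : x ∈ B γ) {n : ℕ} (hn : n ≠ 0) :
    x ^ n ∈ B (γ ^ n) := by
  obtain ⟨n, rfl⟩ := Nat.exists_eq_add_one_of_ne_zero hn
  induction n with
  | zero => simpa using hx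
  | succ n ih => simpa only [pow_succ] using hB.mul_mem (ih n.succ_ne_zero) hx

theorem existsUnique_sum_eq [Fintype Γ] (hB : IsGrading B) (a : A) :
    ∃! g : (γ : Γ) → (B γ).toIntSubmodule, ∑ γ, (g γ : A) = a := by
  obtain ⟨f, ⟨hfB, hfa⟩, hf⟩ := hB.2 a
  refine ⟨fun γ => ⟨f γ, hfB γ⟩, by simpa [Finsupp.sum_fintype] using hfa, fun g hg => ?_⟩
  have := hf (Finsupp.equivFunOnFinite.symm fun γ => g γ)
    ⟨fun γ => (g γ).2, by simpa [Finsupp.sum_fintype] using hg⟩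
  funext γ
  exact Subtype.ext (by simpa using DFunLike.congr_fun this γ)

theorem card_quotient_le_pow_finrank [Fintype Γ] (hB : IsGrading B)
    [Module.Free ℤ (B 1).toIntSubmodule] [Module.Finite ℤ (B 1).toIntSubmodule]
    {p k : ℕ} [Fact p.Prime] {I : Ideal A} [CharP (A ⧸ I) p] [Finite (A ⧸ I)]
    (hexp : ∀ γ : Γ, γ ^ p ^ k = 1) {J : Ideal A} (hJ : ∀ x, x ^ p ^ k ∈ I → x ∈ J) :
    Nat.card (A ⧸ J) ≤ p ^ finrank ℤ (B 1).toIntSubmodule := by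
  let := ZMod.algebra (A ⧸ I) p
  let ψ := (iterateFrobenius (A ⧸ I) p k).comp (Ideal.Quotient.mk I)
  let f : (B 1).toIntSubmodule →+ A ⧸ I := (Ideal.Quotient.mk I).toAddMonoidHom.comp (B 1).subtype
  have hker : RingHom.ker ψ ≤ J := fun x hx => hJ x <| by
    rwa [RingHom.mem_ker, RingHom.comp_apply, iterateFrobenius_def, ← map_pow,
      Ideal.Quotient.eq_zero_iff_mem] at hx
  have hrange : ψ.range.toAddSubgroup ≤ f.range := by
    rintro _ ⟨a, rfl⟩
    obtain ⟨g, hg, -⟩ := hB.existsUnique_sum_eq a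
    rw [← hg, map_sum]
    refine AddSubgroup.sum_mem _ fun γ _ => ⟨⟨g γ ^ p ^ k, ?_⟩, ?_⟩
    · exact hexp γ ▸ hB.pow_mem (g γ).2 (pow_ne_zero k (Fact.out : p.Prime).ne_zero)
    · exact map_pow (Ideal.Quotient.mk I) _ _
  calc Nat.card (A ⧸ J) ≤ Nat.card ψ.range := ψ.card_quotient_le_card_range hker
    _ ≤ Nat.card f.range := AddSubgroup.card_le_of_le hrange
    _ ≤ p ^ finrank ℤ (B 1).toIntSubmodule := f.card_range_le_pow_finrank

section Rank

variable [IsDomain A] [Module.Finite ℤ A]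

theorem finrank_le_finrank_mul (hB : IsGrading B) {δ : Γ} {x : A} (hx : x ∈ B δ) (hx0 : x ≠ 0)
    (γ : Γ) : finrank ℤ (B γ).toIntSubmodule ≤ finrank ℤ (B (γ * δ)).toIntSubmodule :=
  LinearMap.finrank_le_finrank_of_injective
    (f := (LinearMap.mulRight ℤ x).restrict fun _ hy => hB.mul_mem hy hx)
    fun _ _ h => Subtype.ext (mul_right_cancel₀ hx0 (congrArg Subtype.val h))

theorem finrank_eq_finrank_one (hB : IsGrading B) (hne : ∀ γ, ∃ x ∈ B γ, x ≠ 0) (γ : Γ) :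
    finrank ℤ (B γ).toIntSubmodule = finrank ℤ (B 1).toIntSubmodule := by
  obtain ⟨x, hx, hx0⟩ := hne γ⁻¹
  obtain ⟨y, hy, hy0⟩ := hne γ
  have h₁ := hB.finrank_le_finrank_mul hx hx0 γ
  have h₂ := hB.finrank_le_finrank_mul hy hy0 1
  rw [mul_inv_cancel] at h₁
  rw [one_mul] at h₂
  exact le_antisymm h₁ h₂

theorem finrank_eq_card_mul [Fintype Γ] [Module.Free ℤ A] (hB : IsGrading B)
    (hne : ∀ γ, ∃ x ∈ B γ, x ≠ 0) :
    finrank ℤ A = Fintype.card Γ * finrank ℤ (B 1).toIntSubmodule := by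
  classical
  let e := LinearEquiv.ofBijective
    (LinearMap.lsum ℤ (fun γ => (B γ).toIntSubmodule) ℤ fun γ => Submodule.subtype _)
    ((Function.bijective_iff_existsUnique _).mpr fun a => by
      simpa [LinearMap.lsum_apply] using hB.existsUnique_sum_eq a)
  rw [← e.finrank_eq, finrank_pi_fintype,
    Finset.sum_congr rfl fun γ _ => hB.finrank_eq_finrank_one hne γ, Finset.sum_const,
    smul_eq_mul, Finset.card_univ]

end Rank

theorem card_le_of_forall_pow_eq_one [IsDedekindDomain A] [Module.Free ℤ A] [Module.Finite ℤ A]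
    [Fintype Γ] (hB : IsGrading B) (hne : ∀ γ, ∃ x ∈ B γ, x ≠ 0) {p k : ℕ} [hp : Fact p.Prime]
    (hexp : ∀ γ : Γ, γ ^ p ^ k = 1) : Fintype.card Γ ≤ p ^ k := by
  set r := finrank ℤ (B 1).toIntSubmodule
  have hr : 0 < r := by
    obtain ⟨x, hx, hx0⟩ := hne 1
    have : Nontrivial (B 1).toIntSubmodule := ⟨⟨x, hx⟩, 0, fun h => hx0 (congrArg Subtype.val h)⟩
    exact finrank_pos
  have hrank := hB.finrank_eq_card_mul hne
  set I := Ideal.span {(p : A)}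
  have hI : Ideal.absNorm I = p ^ (Fintype.card Γ * r) := by
    rw [Ideal.absNorm_span_natCast, hrank]
  have hI0 : Ideal.absNorm I ≠ 0 := hI ▸ pow_ne_zero _ hp.out.ne_zero
  have : Finite (A ⧸ I) := (Ideal.absNorm_ne_zero_iff I).mp hI0
  have : CharP (A ⧸ I) p := Ideal.charP_quotient_span_natCast (hrank ▸ by positivity) p
  obtain ⟨J, hJ, hIJ⟩ := Ideal.exists_absNorm_le_absNorm_pow_of_pow_mem
    (Ideal.absNorm_eq_zero_iff.not.mp hI0) (pow_ne_zero k hp.out.ne_zero)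
  have hJ : Ideal.absNorm J ≤ p ^ r := by
    rw [Ideal.absNorm_apply, Submodule.cardQuot_apply]
    exact hB.card_quotient_le_pow_finrank hexp hJ
  have : p ^ (Fintype.card Γ * r) ≤ p ^ (p ^ k * r) := calc
    _ = Ideal.absNorm I := hI.symm
    _ ≤ Ideal.absNorm J ^ p ^ k := hIJ
    _ ≤ (p ^ r) ^ p ^ k := Nat.pow_le_pow_left hJ _
    _ = p ^ (p ^ k * r) := by rw [← pow_mul, mul_comm]
  exact Nat.le_of_mul_le_mul_right ((Nat.pow_le_pow_iff_right hp.out.one_lt).mp this) hr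

end IsGrading

theorem grading_group_cyclic_of_dedekind_general {A Γ : Type*} [CommRing A]
    [IsDedekindDomain A] [Module.Free ℤ A] [Module.Finite ℤ A]
    [CommGroup Γ] [Fintype Γ]
    (p m q : ℕ) (hp : p.Prime) (hcard : Fintype.card Γ = p ^ m)
    (hq : Monoid.exponent Γ = q)
    (B : Γ → AddSubgroup A) (hB : IsGrading B)
    (hdim : ∀ γ : Γ, ∃ x ∈ B γ, x ≠ 0 ∧
      ∀ y ∈ B γ, ∃ b ∈ B 1, ∃ n : ℤ, n ≠ 0 ∧ n • y = b * x) :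
    IsCyclic Γ := by
  have : Fact p.Prime := ⟨hp⟩
  obtain ⟨k, -, rfl⟩ : ∃ k ≤ m, q = p ^ k :=
    (Nat.dvd_prime_pow hp).mp (hcard ▸ hq ▸ Group.exponent_dvd_card)
  have hne : ∀ γ, ∃ x ∈ B γ, x ≠ 0 := fun γ =>
    let ⟨x, hx, hx0, _⟩ := hdim γ
    ⟨x, hx, hx0⟩
  have hcard_le := hB.card_le_of_forall_pow_eq_one hne fun γ => hq ▸ Monoid.pow_exponent_eq_one γ
  refine IsCyclic.of_exponent_eq_card (le_antisymm ?_ ?_)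
  · exact Nat.le_of_dvd Nat.card_pos Group.exponent_dvd_nat_card
  · rwa [hq, Nat.card_eq_fintype_card]

/-- If a Dedekind order (the ring of integers of a number field) is graded by a
finite abelian group `Γ` of prime-power order and exponent `q`, with each
rational piece `(B γ)_ℚ` one-dimensional over the field `(B 1)_ℚ`, then `Γ` is
cyclic. -/
theorem grading_group_cyclic_of_dedekind {A Γ : Type*} [CommRing A] [IsDomain A]
    [IsDedekindDomain A] [Module.Free ℤ A] [Module.Finite ℤ A]
    [CommGroup Γ] [Fintype Γ]
    (p m q : ℕ) (hp : p.Prime) (hcard : Fintype.card Γ = p ^ m)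
    (hq : Monoid.exponent Γ = q)
    (B : Γ → AddSubgroup A) (hB : IsGrading B)
    (hdim : ∀ γ : Γ, ∃ x ∈ B γ, x ≠ 0 ∧
      ∀ y ∈ B γ, ∃ b ∈ B 1, ∃ n : ℤ, n ≠ 0 ∧ n • y = b * x) :
    IsCyclic Γ :=
  grading_group_cyclic_of_dedekind_general p m q hp hcard hq B hB hdim
end
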